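/- Assume all relations are ≤ and that all off-diagonal elements of every B_k (0 ≤ k ≤ m), viewed as (n+1)×(n+1) matrices, are nonpositive. Then the SDP relaxation is exact for every right-hand side: η(δ) = ζ(δ) for every δ ∈ ℝ^m. -/

import Mathlib

open Matrix BigOperators

noncomputable section

/-- Trace inner product `⟨A,X⟩ = Σᵢⱼ Aᵢⱼ Xᵢⱼ`. -/
def mInner {N : ℕ} (A X : Matrix (Fin N) (Fin N) ℝ) : ℝ :=
  ∑ i, ∑ j, A i j * X i j

/-- The quadratic function `u ↦ (u,1)ᵀ B (u,1)` on `ℝⁿ`. -/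
def quadF {n : ℕ} (B : Matrix (Fin (n + 1)) (Fin (n + 1)) ℝ) (u : Fin n → ℝ) : ℝ :=
  Fin.snoc u 1 ⬝ᵥ (B *ᵥ Fin.snoc u 1)

/-- A relation on `ℝ` is standard if it is `≤`, `=`, or `≥`. -/
def IsStdRel (r : ℝ → ℝ → Prop) : Prop :=
  r = (· ≤ ·) ∨ r = (· = ·) ∨ r = (· ≥ ·)

section Single

variable (nn m : ℕ) (B : Fin (m + 1) → Matrix (Fin (nn + 1)) (Fin (nn + 1)) ℝ)

/-- Feasibility of `u` for QCQP(δ) (all relations `≤`). -/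
def qcqpFeas (δ : Fin m → ℝ) (u : Fin nn → ℝ) : Prop :=
  ∀ k : Fin m, quadF (B k.succ) u ≤ δ k

/-- The optimal value `ζ(δ)` of QCQP(δ). -/
def qcqpVal (δ : Fin m → ℝ) : EReal :=
  sInf {y : EReal | ∃ u : Fin nn → ℝ,
    qcqpFeas nn m B δ u ∧ y = ((quadF (B 0) u : ℝ) : EReal)}

/-- Feasibility of `X` for the Shor relaxation SDPR(δ). -/
def sdprFeas (δ : Fin m → ℝ) (X : Matrix (Fin (nn + 1)) (Fin (nn + 1)) ℝ) : Prop :=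
  X.PosSemidef ∧ X (Fin.last nn) (Fin.last nn) = 1 ∧
    ∀ k : Fin m, mInner (B k.succ) X ≤ δ k

/-- The optimal value `η(δ)` of SDPR(δ). -/
def sdprVal (δ : Fin m → ℝ) : EReal :=
  sInf {y : EReal | ∃ X : Matrix (Fin (nn + 1)) (Fin (nn + 1)) ℝ,
    sdprFeas nn m B δ X ∧ y = ((mInner (B 0) X : ℝ) : EReal)}

end Single

/-!
Every feasible `u` lifts to the rank-one feasible matrix `X = (u,1)(u,1)ᵀ` with the same
objective value, so `η ≤ ζ`. Conversely, from a feasible `X` take `uᵢ = √Xᵢᵢ`. The diagonal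
terms of `⟨B_k, ·⟩` are unchanged, and the `2 × 2` principal minors of `X` give
`Xᵢⱼ ≤ √Xᵢᵢ √Xⱼⱼ`; since `(B_k)ᵢⱼ ≤ 0` off the diagonal, passing from `X` to `(u,1)(u,1)ᵀ` can
only decrease every `⟨B_k, ·⟩`. So `u` is feasible with `f₀(u) ≤ ⟨B₀, X⟩`, and `ζ ≤ η`.
-/

namespace Matrix.PosSemidef

variable {ι : Type*} {X : Matrix ι ι ℝ}

lemma apply_sq_le (hX : X.PosSemidef) (i j : ι) : X i j ^ 2 ≤ X i i * X j j := by
  classical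
  have hdet := (hX.submatrix ![i, j]).det_nonneg
  have hsymm : X j i = X i j := by simpa using hX.1.apply i j
  simp only [det_fin_two, submatrix_apply, Matrix.cons_val_zero, Matrix.cons_val_one,
    hsymm] at hdet
  nlinarith

lemma apply_le_sqrt_mul_sqrt (hX : X.PosSemidef) (i j : ι) :
    X i j ≤ √(X i i) * √(X j j) := by
  rw [← Real.sqrt_mul hX.diag_nonneg]
  exact (le_abs_self _).trans (Real.abs_le_sqrt (hX.apply_sq_le i j))

end Matrix.PosSemidef

lemma mInner_vecMulVec_self {N : ℕ} (A : Matrix (Fin N) (Fin N) ℝ) (v : Fin N → ℝ) :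
    mInner A (vecMulVec v v) = v ⬝ᵥ (A *ᵥ v) := by
  simp only [mInner, vecMulVec_apply, dotProduct, mulVec, Finset.mul_sum]
  exact Finset.sum_congr rfl fun i _ => Finset.sum_congr rfl fun j _ => by ring

lemma quadF_eq_mInner {n : ℕ} (B : Matrix (Fin (n + 1)) (Fin (n + 1)) ℝ) (u : Fin n → ℝ) :
    quadF B u = mInner B (vecMulVec (Fin.snoc u 1) (Fin.snoc u 1)) :=
  (mInner_vecMulVec_self B _).symm

lemma mInner_vecMulVec_sqrt_diag_le {N : ℕ} {A X : Matrix (Fin N) (Fin N) ℝ}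
    (hA : ∀ i j, i ≠ j → A i j ≤ 0) (hX : X.PosSemidef) :
    mInner A (vecMulVec (fun i => √(X i i)) (fun i => √(X i i))) ≤ mInner A X := by
  refine Finset.sum_le_sum fun i _ => Finset.sum_le_sum fun j _ => ?_
  rw [vecMulVec_apply]
  obtain rfl | hij := eq_or_ne i j
  · rw [Real.mul_self_sqrt hX.diag_nonneg]
  · exact mul_le_mul_of_nonpos_left (hX.apply_le_sqrt_mul_sqrt i j) (hA i j hij)

lemma snoc_sqrt_diag_eq {N : ℕ} {X : Matrix (Fin (N + 1)) (Fin (N + 1)) ℝ}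
    (hX : X (Fin.last N) (Fin.last N) = 1) :
    (Fin.snoc (fun i : Fin N => √(X i.castSucc i.castSucc)) 1 : Fin (N + 1) → ℝ) =
      fun i => √(X i i) := by
  funext i
  induction i using Fin.lastCases <;> simp [hX]

lemma quadF_sqrt_diag_le_mInner {N : ℕ} {A X : Matrix (Fin (N + 1)) (Fin (N + 1)) ℝ}
    (hA : ∀ i j, i ≠ j → A i j ≤ 0) (hX : X.PosSemidef)
    (hXlast : X (Fin.last N) (Fin.last N) = 1) :
    quadF A (fun i => √(X i.castSucc i.castSucc)) ≤ mInner A X := by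
  rw [quadF_eq_mInner, snoc_sqrt_diag_eq hXlast]
  exact mInner_vecMulVec_sqrt_diag_le hA hX

section Values

variable (nn m : ℕ) (B : Fin (m + 1) → Matrix (Fin (nn + 1)) (Fin (nn + 1)) ℝ)

lemma sdprFeas_vecMulVec_snoc {δ : Fin m → ℝ} {u : Fin nn → ℝ} (hu : qcqpFeas nn m B δ u) :
    sdprFeas nn m B δ (vecMulVec (Fin.snoc u 1) (Fin.snoc u 1)) := by
  refine ⟨?_, by simp [vecMulVec_apply], fun k => (quadF_eq_mInner _ u).symm ▸ hu k⟩
  simpa using posSemidef_vecMulVec_self_star (Fin.snoc u 1 : Fin (nn + 1) → ℝ)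

lemma sdprVal_le_qcqpVal (δ : Fin m → ℝ) : sdprVal nn m B δ ≤ qcqpVal nn m B δ := by
  refine le_sInf ?_
  rintro _ ⟨u, hu, rfl⟩
  exact sInf_le ⟨_, sdprFeas_vecMulVec_snoc nn m B hu, by rw [quadF_eq_mInner]⟩

lemma qcqpVal_le_sdprVal (hB : ∀ k i j, i ≠ j → B k i j ≤ 0) (δ : Fin m → ℝ) :
    qcqpVal nn m B δ ≤ sdprVal nn m B δ := by
  refine le_sInf ?_
  rintro _ ⟨X, ⟨hX, hXlast, hXfeas⟩, rfl⟩
  have hle k := quadF_sqrt_diag_le_mInner (hB k) hX hXlast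
  exact sInf_le_of_le ⟨_, fun k => (hle k.succ).trans (hXfeas k), rfl⟩
    (EReal.coe_le_coe_iff.mpr (hle 0))

end Values

theorem offdiag_nonpos_sdpr_exact_general
    (nn m : ℕ)
    (B : Fin (m + 1) → Matrix (Fin (nn + 1)) (Fin (nn + 1)) ℝ)
    (hoffdiag : ∀ (k : Fin (m + 1)) (i j : Fin (nn + 1)), i ≠ j → B k i j ≤ 0) :
    ∀ δ : Fin m → ℝ, sdprVal nn m B δ = qcqpVal nn m B δ := fun δ =>
  le_antisymm (sdprVal_le_qcqpVal nn m B δ) (qcqpVal_le_sdprVal nn m B hoffdiag δ)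

/-- **Corollary 4.4 (i).** If all relations are `≤` and all off-diagonal entries of every
`Bₖ` are nonpositive, then the Shor SDP relaxation is exact for every right-hand side:
`η(δ) = ζ(δ)` for every `δ ∈ ℝᵐ`. -/
theorem offdiag_nonpos_sdpr_exact
    (nn m : ℕ) (hnn : 0 < nn) (hm : 0 < m)
    (B : Fin (m + 1) → Matrix (Fin (nn + 1)) (Fin (nn + 1)) ℝ)
    (hBsymm : ∀ k, (B k).IsSymm)
    (hBcorner : ∀ k, B k (Fin.last nn) (Fin.last nn) = 0)
    (hoffdiag : ∀ (k : Fin (m + 1)) (i j : Fin (nn + 1)), i ≠ j → B k i j ≤ 0) :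
    ∀ δ : Fin m → ℝ, sdprVal nn m B δ = qcqpVal nn m B δ :=
  offdiag_nonpos_sdpr_exact_general nn m B hoffdiag
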